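/- arXiv:2303.05811 — 2 statements merged into one kernel-verified Lean document; each statement's English description precedes it below -/
import Mathlib

section
/- Let D be a regular 4^m 2^{(n+1)-(p+1)} design with 2^k runs, represented by pairwise direct-summing two-dimensional subspaces U_1, …, U_m of V = (ZMod 2)^k and two-level vectors w_1, …, w_{n+1} ∈ V such that the U_t together with the w_i span V, with resolution at least III, and whose defining relation K contains at least one nonzero word (equivalently 2m + n + 1 > k). If, for some index i ∈ {1, …, n+1}, the delete-one-factor projection D_(i) has minimum aberration of type m among all the delete-one-factor projections D_(1), …, D_(n+1) of D, then w_i lies in the span of U_1, …, U_m together with the remaining vectors w_j (j ≠ i); consequently the U_t together with {w_j : j ≠ i} still span V, so that D_(i) has 2^k distinct runs. (Lemma A.1 of the paper.) -/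
/-- The defining relation (including the zero word) of a regular `4^m 2^{n-p}` design
represented by subspaces `U t` (four-level factors) and vectors `w i` (two-level factors)
in `V = (ZMod 2)^k`: the set of pairs `(s, u)` with each `u t ∈ U t` and
`∑ i, s i • w i + ∑ t, u t = 0`. -/
def wordSet {k m n : ℕ} (U : Fin m → Submodule (ZMod 2) (Fin k → ZMod 2))
    (w : Fin n → Fin k → ZMod 2) :
    Set ((Fin n → ZMod 2) × (Fin m → (Fin k → ZMod 2))) :=
  {su | (∀ t, su.2 t ∈ U t) ∧ (∑ i, su.1 i • w i) + (∑ t, su.2 t) = 0}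

/-- The length of a word `(s, u)`: the number of indices `i` with `s i = 1` plus the
number of four-level factors `t` with `u t ≠ 0`. -/
def wordLength {k m n : ℕ} (su : (Fin n → ZMod 2) × (Fin m → (Fin k → ZMod 2))) : ℕ :=
  (Finset.univ.filter fun i => su.1 i = 1).card +
    (Finset.univ.filter fun t => su.2 t ≠ 0).card

/-- The type of a word `(s, u)`: the number of four-level factors `t` with `u t ≠ 0`. -/
def wordType {k m n : ℕ} (su : (Fin n → ZMod 2) × (Fin m → (Fin k → ZMod 2))) : ℕ :=
  (Finset.univ.filter fun t => su.2 t ≠ 0).card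

/-- `Acount U w ℓ t` is the number `A_{ℓ,t}` of defining words of length `ℓ` and type `t`. -/
noncomputable def Acount {k m n : ℕ} (U : Fin m → Submodule (ZMod 2) (Fin k → ZMod 2))
    (w : Fin n → Fin k → ZMod 2) (ℓ t : ℕ) : ℕ :=
  Nat.card {su : (Fin n → ZMod 2) × (Fin m → (Fin k → ZMod 2)) //
    su ∈ wordSet U w ∧ su ≠ 0 ∧ wordLength su = ℓ ∧ wordType su = t}

/-- `wlpLexLt A B` says that the word length pattern of type `m` recorded by `A`
(as a function `(length, type) ↦ A_{ℓ,t}`) is lexicographically strictly smaller than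
the one recorded by `B`, where positions are ordered by increasing length and,
within a length, by decreasing type: "less aberration of type m". -/
def wlpLexLt (A B : ℕ → ℕ → ℕ) : Prop :=
  ∃ ℓ t, A ℓ t < B ℓ t ∧
    ∀ ℓ' t', (ℓ' < ℓ ∨ (ℓ' = ℓ ∧ t < t')) → A ℓ' t' = B ℓ' t'

/-! If `w i` were not in the span of the `U t` and the other `w j`, no defining word could
involve factor `i`, so deleting it leaves the defining relation unchanged. By independence of
the `U t`, a nonzero word involves some two-level factor `j`. The words of `D_(j)` are those of
`D` not involving `j`, so every `A_{ℓ,t}` of `D_(j)` is at most that of `D_(i)`, and strictly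
smaller at the length and type of that word: `D_(j)` has less aberration, a contradiction. -/

lemma wlpLexLt_of_le_of_lt {A B : ℕ → ℕ → ℕ} (T : ℕ) (hle : ∀ ℓ t, A ℓ t ≤ B ℓ t)
    (hhigh : ∀ ℓ t, T < t → A ℓ t = B ℓ t) {ℓ₀ t₀ : ℕ} (hlt : A ℓ₀ t₀ < B ℓ₀ t₀) :
    wlpLexLt A B := by
  classical
  have hdiff : ∀ ℓ t, A ℓ t ≠ B ℓ t → t ≤ T := fun ℓ t hne =>
    le_of_not_gt fun ht => hne (hhigh ℓ t ht)
  have hex : ∃ ℓ t, t ≤ T ∧ A ℓ t ≠ B ℓ t := ⟨ℓ₀, t₀, hdiff _ _ hlt.ne, hlt.ne⟩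
  set ℓ₁ := Nat.find hex
  obtain ⟨t₁, ht₁T, ht₁⟩ := Nat.find_spec hex
  -- the first differing length, and within it the largest differing type
  refine ⟨ℓ₁, Nat.findGreatest (fun t => A ℓ₁ t ≠ B ℓ₁ t) T,
    (hle _ _).lt_of_ne (Nat.findGreatest_spec (P := fun t => A ℓ₁ t ≠ B ℓ₁ t) ht₁T ht₁), ?_⟩
  rintro ℓ' t' (hℓ' | ⟨rfl, ht'⟩) <;> by_contra hne
  · exact Nat.find_min hex hℓ' ⟨t', hdiff _ _ hne, hne⟩
  · exact Nat.findGreatest_is_greatest ht' (hdiff _ _ hne) hne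

lemma sup_span_range_eq_of_mem {R M ι : Type*} [Semiring R] [AddCommMonoid M] [Module R M]
    {S : Submodule R M} {v : ι → M} {i : ι} (h : v i ∈ S ⊔ Submodule.span R (v '' {j | j ≠ i})) :
    S ⊔ Submodule.span R (Set.range v) = S ⊔ Submodule.span R (v '' {j | j ≠ i}) := by
  have hrange : Set.range v = insert (v i) (v '' {j | j ≠ i}) := by
    rw [← Set.image_insert_eq, ← Set.image_univ]
    congr
    ext j
    simp [em]
  rw [hrange, Submodule.span_insert, sup_left_comm, sup_eq_right]
  exact (Submodule.span_singleton_le_iff_mem _ _).2 h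

section Words

variable {k m n : ℕ} (U : Fin m → Submodule (ZMod 2) (Fin k → ZMod 2))

lemma wordType_le (su : (Fin n → ZMod 2) × (Fin m → (Fin k → ZMod 2))) : wordType su ≤ m :=
  (Finset.card_filter_le _ _).trans_eq (Finset.card_fin m)

lemma Acount_eq_zero_of_lt (w : Fin n → Fin k → ZMod 2) (ℓ : ℕ) {t : ℕ} (ht : m < t) :
    Acount U w ℓ t = 0 :=
  have : IsEmpty {su : (Fin n → ZMod 2) × (Fin m → (Fin k → ZMod 2)) //
      su ∈ wordSet U w ∧ su ≠ 0 ∧ wordLength su = ℓ ∧ wordType su = t} :=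
    ⟨fun ⟨su, _, _, _, hsu⟩ => by have := wordType_le su; omega⟩
  Nat.card_of_isEmpty

def wordsOfShape (w : Fin n → Fin k → ZMod 2) (ℓ t : ℕ) :
    Set ((Fin n → ZMod 2) × (Fin m → (Fin k → ZMod 2))) :=
  {su | su ∈ wordSet U w ∧ su ≠ 0 ∧ wordLength su = ℓ ∧ wordType su = t}

lemma Acount_eq_ncard (w : Fin n → Fin k → ZMod 2) (ℓ t : ℕ) :
    Acount U w ℓ t = (wordsOfShape U w ℓ t).ncard :=
  Nat.card_coe_set_eq _

def extendWord (p : Fin (n + 1)) (su : (Fin n → ZMod 2) × (Fin m → (Fin k → ZMod 2))) :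
    (Fin (n + 1) → ZMod 2) × (Fin m → (Fin k → ZMod 2)) :=
  (p.insertNth 0 su.1, su.2)

variable {U}

lemma extendWord_injective (p : Fin (n + 1)) :
    Function.Injective (extendWord (k := k) (m := m) p) := by
  rintro ⟨s, u⟩ ⟨s', u'⟩ h
  simp_all [extendWord]

lemma extendWord_eq_zero_iff {p : Fin (n + 1)}
    {su : (Fin n → ZMod 2) × (Fin m → (Fin k → ZMod 2))} :
    extendWord p su = 0 ↔ su = 0 := by
  simp [extendWord, Prod.ext_iff, funext_iff, Fin.forall_iff_succAbove p]

lemma wordLength_extendWord (p : Fin (n + 1))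
    (su : (Fin n → ZMod 2) × (Fin m → (Fin k → ZMod 2))) :
    wordLength (extendWord p su) = wordLength su := by
  simp only [wordLength]
  congr 1
  rw [Finset.card_filter, Finset.card_filter, Fin.sum_univ_succAbove _ p]
  simp [extendWord]

lemma extendWord_mem_wordSet_iff {w : Fin (n + 1) → Fin k → ZMod 2} {p : Fin (n + 1)}
    {su : (Fin n → ZMod 2) × (Fin m → (Fin k → ZMod 2))} :
    extendWord p su ∈ wordSet U w ↔ su ∈ wordSet U (w ∘ p.succAbove) := by
  simp [wordSet, extendWord, Fin.sum_univ_succAbove _ p]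

lemma range_extendWord (p : Fin (n + 1)) :
    Set.range (extendWord (k := k) (m := m) p) = {su | su.1 p = 0} := by
  ext su
  constructor
  · rintro ⟨su, rfl⟩
    simp [extendWord]
  · intro hs
    exact ⟨(Fin.removeNth p su.1, su.2), by simp [extendWord, hs.symm]⟩

end Words

section DeleteFactor

variable {k m n : ℕ} {U : Fin m → Submodule (ZMod 2) (Fin k → ZMod 2)}
  {w : Fin (n + 1) → Fin k → ZMod 2}

lemma image_extendWord_wordsOfShape (p : Fin (n + 1)) (ℓ t : ℕ) :
    extendWord p '' wordsOfShape U (w ∘ p.succAbove) ℓ t =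
      {su | su ∈ wordsOfShape U w ℓ t ∧ su.1 p = 0} := by
  ext su
  constructor
  · rintro ⟨su, ⟨hsu, hne, hlen, htype⟩, rfl⟩
    refine ⟨⟨extendWord_mem_wordSet_iff.2 hsu, extendWord_eq_zero_iff.not.2 hne,
      (wordLength_extendWord p su).trans hlen, htype⟩, by simp [extendWord]⟩
  · rintro ⟨⟨hsu, hne, hlen, htype⟩, hp⟩
    obtain ⟨su, rfl⟩ : su ∈ Set.range (extendWord p) := (range_extendWord p).symm ▸ hp
    exact ⟨su, ⟨extendWord_mem_wordSet_iff.1 hsu, extendWord_eq_zero_iff.not.1 hne,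
      (wordLength_extendWord p su).symm.trans hlen, htype⟩, rfl⟩

lemma Acount_comp_succAbove (p : Fin (n + 1)) (ℓ t : ℕ) :
    Acount U (w ∘ p.succAbove) ℓ t = {su | su ∈ wordsOfShape U w ℓ t ∧ su.1 p = 0}.ncard := by
  rw [Acount_eq_ncard, ← image_extendWord_wordsOfShape,
    Set.ncard_image_of_injective _ (extendWord_injective p)]

lemma Acount_comp_succAbove_le (p : Fin (n + 1)) (ℓ t : ℕ) :
    Acount U (w ∘ p.succAbove) ℓ t ≤ Acount U w ℓ t := by
  rw [Acount_comp_succAbove, Acount_eq_ncard]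
  exact Set.ncard_le_ncard (fun _ h => h.1) (Set.toFinite _)

lemma Acount_comp_succAbove_lt {p : Fin (n + 1)}
    {su : (Fin (n + 1) → ZMod 2) × (Fin m → (Fin k → ZMod 2))}
    (hsu : su ∈ wordSet U w) (hne : su ≠ 0) (hp : su.1 p ≠ 0) :
    Acount U (w ∘ p.succAbove) (wordLength su) (wordType su) <
      Acount U w (wordLength su) (wordType su) := by
  rw [Acount_comp_succAbove, Acount_eq_ncard]
  refine Set.ncard_lt_ncard ⟨fun _ h => h.1, fun hsub => hp ?_⟩ (Set.toFinite _)
  exact (hsub ⟨hsu, hne, rfl, rfl⟩).2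

lemma Acount_comp_succAbove_eq {p : Fin (n + 1)} (h : ∀ su ∈ wordSet U w, su.1 p = 0) :
    Acount U (w ∘ p.succAbove) = Acount U w := by
  ext ℓ t
  rw [Acount_comp_succAbove, Acount_eq_ncard]
  exact congrArg Set.ncard (Set.sep_eq_self_iff_mem_true.2 fun su hsu => h su hsu.1)

end DeleteFactor

section Relation

variable {k m n : ℕ} {U : Fin m → Submodule (ZMod 2) (Fin k → ZMod 2)}
  {w : Fin n → Fin k → ZMod 2} {su : (Fin n → ZMod 2) × (Fin m → (Fin k → ZMod 2))}

lemma mem_sup_span_of_mem_wordSet (hsu : su ∈ wordSet U w) {p : Fin n} (hp : su.1 p ≠ 0) :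
    w p ∈ (⨆ t, U t) ⊔ Submodule.span (ZMod 2) (w '' {j | j ≠ p}) := by
  obtain ⟨hU, hrel⟩ := hsu
  set S := (⨆ t, U t) ⊔ Submodule.span (ZMod 2) (w '' {j | j ≠ p})
  have hrest : ∑ j ∈ Finset.univ.erase p, su.1 j • w j + ∑ t, su.2 t ∈ S :=
    S.add_mem
      (S.sum_mem fun j hj => Submodule.mem_sup_right
        (Submodule.smul_mem _ _ (Submodule.subset_span ⟨j, Finset.ne_of_mem_erase hj, rfl⟩)))
      (S.sum_mem fun t _ => Submodule.mem_sup_left (Submodule.mem_iSup_of_mem t (hU t)))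
  rw [← Finset.add_sum_erase _ _ (Finset.mem_univ p), add_assoc] at hrel
  rw [← S.smul_mem_iff hp, ← S.add_mem_iff_left hrest, hrel]
  exact S.zero_mem

lemma fst_ne_zero_of_mem_wordSet (hU : iSupIndep U) (hsu : su ∈ wordSet U w) (hne : su ≠ 0) :
    su.1 ≠ 0 := by
  intro hs
  have hrel : ∑ t, su.2 t = 0 := by simpa [hs] using hsu.2
  refine hne (Prod.ext hs (funext fun t => ?_))
  exact (iSupIndep_iff_finsetSum_eq_zero_imp_eq_zero U).1 hU Finset.univ su.2
    (fun t _ => hsu.1 t) hrel t (Finset.mem_univ t)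

end Relation

theorem deleteOneFactor_minAberration_spans_general {k m n : ℕ}
    (U : Fin m → Submodule (ZMod 2) (Fin k → ZMod 2))
    (hUind : iSupIndep U)
    (w : Fin (n + 1) → Fin k → ZMod 2)
    (hspan : (⨆ t, U t) ⊔ Submodule.span (ZMod 2) (Set.range w) = ⊤)
    (hword : ∃ su ∈ wordSet U w, su ≠ 0)
    (i : Fin (n + 1))
    (hMA : ∀ j : Fin (n + 1),
      ¬ wlpLexLt (Acount U (w ∘ j.succAbove)) (Acount U (w ∘ i.succAbove))) :
    w i ∈ (⨆ t, U t) ⊔ Submodule.span (ZMod 2) (w '' {j | j ≠ i}) ∧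
      (⨆ t, U t) ⊔ Submodule.span (ZMod 2) (Set.range (w ∘ i.succAbove)) = ⊤ := by
  have hmem : w i ∈ (⨆ t, U t) ⊔ Submodule.span (ZMod 2) (w '' {j | j ≠ i}) := by
    by_contra hni
    have hvanish : ∀ su ∈ wordSet U w, su.1 i = 0 := fun su hsu =>
      by_contra fun hi => hni (mem_sup_span_of_mem_wordSet hsu hi)
    obtain ⟨su, hsu, hne⟩ := hword
    obtain ⟨j, hj⟩ := Function.ne_iff.mp (fst_ne_zero_of_mem_wordSet hUind hsu hne)
    refine hMA j ?_
    rw [Acount_comp_succAbove_eq hvanish]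
    refine wlpLexLt_of_le_of_lt m (Acount_comp_succAbove_le j) (fun ℓ t ht => ?_)
      (Acount_comp_succAbove_lt hsu hne hj)
    rw [Acount_eq_zero_of_lt U _ ℓ ht, Acount_eq_zero_of_lt U _ ℓ ht]
  have himg : w '' {j | j ≠ i} = Set.range (w ∘ i.succAbove) := by
    rw [Set.range_comp, Fin.range_succAbove]
    rfl
  refine ⟨hmem, ?_⟩
  rw [← himg, ← sup_span_range_eq_of_mem hmem, hspan]

/-- **Lemma A.1.** If the delete-one-factor projection `D_(i)` has minimum aberration of
type `m` among all delete-one-factor projections of a resolution-≥III design `D` whose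
defining relation contains a nonzero word, then `w i` lies in the span of the `U t` and the
remaining `w j`, and the remaining factors still span `V`, so `D_(i)` has `2^k` distinct runs. -/
theorem deleteOneFactor_minAberration_spans {k m n : ℕ}
    (U : Fin m → Submodule (ZMod 2) (Fin k → ZMod 2))
    (hU2 : ∀ t, Module.finrank (ZMod 2) (U t) = 2)
    (hUind : iSupIndep U)
    (w : Fin (n + 1) → Fin k → ZMod 2)
    (hspan : (⨆ t, U t) ⊔ Submodule.span (ZMod 2) (Set.range w) = ⊤)
    (hres : ∀ su ∈ wordSet U w, su ≠ 0 → 3 ≤ wordLength su)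
    (hword : ∃ su ∈ wordSet U w, su ≠ 0)
    (i : Fin (n + 1))
    (hMA : ∀ j : Fin (n + 1),
      ¬ wlpLexLt (Acount U (w ∘ j.succAbove)) (Acount U (w ∘ i.succAbove))) :
    w i ∈ (⨆ t, U t) ⊔ Submodule.span (ZMod 2) (w '' {j | j ≠ i}) ∧
      (⨆ t, U t) ⊔ Submodule.span (ZMod 2) (Set.range (w ∘ i.succAbove)) = ⊤ :=
  deleteOneFactor_minAberration_spans_general U hUind w hspan hword i hMA
end

section
/- Consider regular 2^{5-1} designs with 16 runs, represented by 5 nonzero, pairwise distinct vectors v_1, …, v_5 spanning (ZMod 2)^4 (the nonzero-and-distinct condition is equivalent to resolution at least III). Call two such designs isomorphic if there exist g ∈ GL(4, ZMod 2) and a permutation σ of {1, …, 5} with g(v_i) = v'_{σ(i)} for all i. Then there are exactly 3 isomorphism classes of such designs. -/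
/-- A regular two-level fractional factorial design with `2^k` runs and `n` factors of
resolution at least III: `n` nonzero, pairwise distinct vectors spanning `(ZMod 2)^k`. -/
def TwoLevelDesign (n k : ℕ) : Type :=
  {v : Fin n → Fin k → ZMod 2 //
    (∀ i, v i ≠ 0) ∧ Function.Injective v ∧
      Submodule.span (ZMod 2) (Set.range v) = ⊤}

/-- Isomorphism of regular two-level designs: a linear automorphism `g` of `(ZMod 2)^k`
together with a permutation `σ` of the factors with `g (v i) = v' (σ i)` for all `i`. -/
def TwoLevelDesignIso {n k : ℕ} (D D' : TwoLevelDesign n k) : Prop :=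
  ∃ (g : (Fin k → ZMod 2) ≃ₗ[ZMod 2] (Fin k → ZMod 2)) (σ : Equiv.Perm (Fin n)),
    ∀ i, g (D.1 i) = D'.1 (σ i)

namespace TLD

abbrev V4 := Fin 4 → ZMod 2

def std (j : Fin 4) : V4 := fun i => if i = j then 1 else 0

def wv : Fin 3 → V4 := ![![1,1,0,0], ![1,1,1,0], ![1,1,1,1]]

def mkD (w : V4) : Fin 5 → V4 := Fin.snoc std w

/-- raw iso relation -/
def Rel (v v' : Fin 5 → V4) : Prop :=
  ∃ (g : V4 ≃ₗ[ZMod 2] V4) (σ : Equiv.Perm (Fin 5)), ∀ i, g (v i) = v' (σ i)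

lemma Rel.symm {v v' : Fin 5 → V4} (h : Rel v v') : Rel v' v := by
  obtain ⟨g, σ, h⟩ := h
  exact ⟨g.symm, σ.symm, fun i => by
    have := h (σ.symm i); simp at this; rw [← this]; simp⟩

lemma Rel.trans {u v w : Fin 5 → V4} (h1 : Rel u v) (h2 : Rel v w) : Rel u w := by
  obtain ⟨g1, σ1, h1⟩ := h1
  obtain ⟨g2, σ2, h2⟩ := h2
  exact ⟨g1.trans g2, σ1.trans σ2, fun i => by simp [LinearEquiv.trans_apply, h1, h2]⟩

lemma span_top_of_std_mem {v : Fin 5 → V4} (h : ∀ j : Fin 4, std j ∈ Set.range v) :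
    Submodule.span (ZMod 2) (Set.range v) = ⊤ := by
  rw [eq_top_iff]
  have hb : Submodule.span (ZMod 2) (Set.range std) = ⊤ := by
    have : std = fun j => Pi.basisFun (ZMod 2) (Fin 4) j := by
      funext j i
      simp [std, Pi.basisFun_apply, Pi.single_apply, eq_comm]
    rw [this]
    exact Module.Basis.span_eq _
  rw [← hb]
  exact Submodule.span_le.2 (fun x hx => Submodule.subset_span (by
    obtain ⟨j, rfl⟩ := hx; exact h j))

lemma std_eq_basisFun : std = fun j => Pi.basisFun (ZMod 2) (Fin 4) j := by
  funext j i
  simp [std, Pi.basisFun_apply, Pi.single_apply, eq_comm]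

/-- step A: normalize the first four vectors to the standard basis -/
lemma stepA (D : TwoLevelDesign 5 4) :
    ∃ w : V4, w ≠ 0 ∧ (∀ j, w ≠ std j) ∧ Rel D.1 (mkD w) := by
  obtain ⟨v, hnz, hinj, hspan⟩ := D
  obtain ⟨t, hts, htspan, htli⟩ := exists_linearIndependent (ZMod 2) (Set.range v)
  rw [hspan] at htspan
  haveI : Fintype t := ((Set.finite_range v).subset hts).fintype
  let B : Module.Basis t (ZMod 2) V4 := Module.Basis.mk htli (by rw [Subtype.range_coe, htspan])
  have h4 : Module.finrank (ZMod 2) V4 = 4 := by simp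
  rw [Module.finrank_eq_card_basis B] at h4
  let e : Fin 4 ≃ t := (Fintype.equivFinOfCardEq h4).symm
  let B' : Module.Basis (Fin 4) (ZMod 2) V4 := B.reindex e.symm
  have hB' : ∀ j, (B' j : V4) = ↑(e j) := fun j => by
    simp [B', B, Module.Basis.reindex_apply, Module.Basis.mk_apply]
  have hmem : ∀ j : Fin 4, (B' j : V4) ∈ Set.range v := fun j => by
    rw [hB' j]; exact hts (e j).2
  choose f hf using hmem
  have hfinj : Function.Injective f := by
    intro j j' hjj
    have : (B' j : V4) = B' j' := by rw [← hf j, ← hf j', hjj]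
    exact B'.injective this
  classical
  let img : Finset (Fin 5) := Finset.image f Finset.univ
  have himg : img.card = 4 := by
    rw [Finset.card_image_of_injective _ hfinj, Finset.card_univ, Fintype.card_fin]
  have hcompl : imgᶜ.card = 1 := by
    rw [Finset.card_compl, himg]; rfl
  obtain ⟨i5, hi5⟩ := Finset.card_eq_one.mp hcompl
  have hi5n : i5 ∉ img := by
    have : i5 ∈ imgᶜ := hi5 ▸ Finset.mem_singleton_self i5
    exact Finset.mem_compl.mp this
  let σf : Fin 5 → Fin 5 := Fin.snoc f i5
  have hσinj : Function.Injective σf := by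
    intro x y hxy
    induction x using Fin.lastCases with
    | last =>
      induction y using Fin.lastCases with
      | last => rfl
      | cast j =>
        exfalso; apply hi5n
        simp only [σf, Fin.snoc_last, Fin.snoc_castSucc] at hxy
        exact Finset.mem_image.mpr ⟨j, Finset.mem_univ j, hxy.symm⟩
    | cast j =>
      induction y using Fin.lastCases with
      | last =>
        exfalso; apply hi5n
        simp only [σf, Fin.snoc_last, Fin.snoc_castSucc] at hxy
        exact Finset.mem_image.mpr ⟨j, Finset.mem_univ j, hxy⟩
      | cast j' =>
        simp only [σf, Fin.snoc_castSucc] at hxy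
        rw [hfinj hxy]
  let σe : Equiv.Perm (Fin 5) := Equiv.ofBijective σf (Finite.injective_iff_bijective.mp hσinj)
  let g : V4 ≃ₗ[ZMod 2] V4 := B'.equiv (Pi.basisFun (ZMod 2) (Fin 4)) (Equiv.refl _)
  refine ⟨g (v i5), ?_, ?_, ?_⟩
  · intro h
    apply hnz i5
    have := g.injective (h.trans g.map_zero.symm)
    exact this
  · intro j h
    apply hi5n
    have h2 : g (v i5) = g (v (f j)) := by
      rw [h, hf j]
      simp [g, Module.Basis.equiv_apply, std_eq_basisFun]
    have := hinj (g.injective h2)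
    exact Finset.mem_image.mpr ⟨j, Finset.mem_univ j, this.symm⟩
  · refine ⟨g, σe.symm, fun i => ?_⟩
    have key : ∀ i : Fin 5, g (v (σe i)) = mkD (g (v i5)) i := by
      intro i
      induction i using Fin.lastCases with
      | last =>
        have : σe (Fin.last 4) = i5 := by
          simp only [σe, Equiv.ofBijective_apply, σf, Fin.snoc_last]
        rw [this]
        simp only [mkD, Fin.snoc_last]
      | cast j =>
        have : σe (Fin.castSucc j) = f j := by
          simp [σe, Equiv.ofBijective_apply, σf, Fin.snoc_castSucc]
        rw [this, hf j]
        have : mkD (g (v i5)) (Fin.castSucc j) = std j := by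
          simp [mkD, Fin.snoc_castSucc]
        rw [this]
        simp [g, Module.Basis.equiv_apply, std_eq_basisFun]
    have := key (σe.symm i)
    rwa [Equiv.apply_symm_apply] at this


def mkP4 (f g : Fin 4 → Fin 4) (h1 : ∀ x, g (f x) = x) (h2 : ∀ x, f (g x) = x) :
    Equiv.Perm (Fin 4) := ⟨f, g, h1, h2⟩

def mkP5 (f g : Fin 5 → Fin 5) (h1 : ∀ x, g (f x) = x) (h2 : ∀ x, f (g x) = x) :
    Equiv.Perm (Fin 5) := ⟨f, g, h1, h2⟩

lemma rel_of_perm (w w' : V4) (π : Equiv.Perm (Fin 4)) (ρ : Equiv.Perm (Fin 5))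
    (h : ∀ i, (mkD w i) ∘ π = mkD w' (ρ i)) : Rel (mkD w) (mkD w') :=
  ⟨LinearEquiv.funCongrLeft (ZMod 2) (ZMod 2) π, ρ, fun i => by
    funext x
    simpa [LinearEquiv.funCongrLeft_apply, LinearMap.funLeft_apply] using congrFun (h i) x⟩

lemma stepB (w : V4) (h0 : w ≠ 0) (hs : ∀ j, w ≠ std j) :
    ∃ m : Fin 3, Rel (mkD w) (mkD (wv m)) := by
  obtain ⟨a, b, c, d, rfl⟩ : ∃ a b c d, w = ![a, b, c, d] :=
    ⟨w 0, w 1, w 2, w 3, by funext i; fin_cases i <;> rfl⟩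
  have two : ∀ x : ZMod 2, x = 0 ∨ x = 1 := by decide
  rcases two a with rfl | rfl <;> rcases two b with rfl | rfl <;>
    rcases two c with rfl | rfl <;> rcases two d with rfl | rfl
  · exact absurd (by decide) h0
  · exact absurd (by decide) (hs 3)
  · exact absurd (by decide) (hs 2)
  · exact ⟨0, rel_of_perm _ _ (mkP4 ![2,3,0,1] ![2,3,0,1] (by decide) (by decide))
      (mkP5 ![2,3,0,1, 4] ![2,3,0,1, 4] (by decide) (by decide)) (by decide)⟩
  · exact absurd (by decide) (hs 1)
  · exact ⟨0, rel_of_perm _ _ (mkP4 ![1,3,0,2] ![2,0,3,1] (by decide) (by decide))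
      (mkP5 ![2,0,3,1, 4] ![1,3,0,2, 4] (by decide) (by decide)) (by decide)⟩
  · exact ⟨0, rel_of_perm _ _ (mkP4 ![1,2,0,3] ![2,0,1,3] (by decide) (by decide))
      (mkP5 ![2,0,1,3, 4] ![1,2,0,3, 4] (by decide) (by decide)) (by decide)⟩
  · exact ⟨1, rel_of_perm _ _ (mkP4 ![1,2,3,0] ![3,0,1,2] (by decide) (by decide))
      (mkP5 ![3,0,1,2, 4] ![1,2,3,0, 4] (by decide) (by decide)) (by decide)⟩
  · exact absurd (by decide) (hs 0)
  · exact ⟨0, rel_of_perm _ _ (mkP4 ![0,3,1,2] ![0,2,3,1] (by decide) (by decide))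
      (mkP5 ![0,2,3,1, 4] ![0,3,1,2, 4] (by decide) (by decide)) (by decide)⟩
  · exact ⟨0, rel_of_perm _ _ (mkP4 ![0,2,1,3] ![0,2,1,3] (by decide) (by decide))
      (mkP5 ![0,2,1,3, 4] ![0,2,1,3, 4] (by decide) (by decide)) (by decide)⟩
  · exact ⟨1, rel_of_perm _ _ (mkP4 ![0,2,3,1] ![0,3,1,2] (by decide) (by decide))
      (mkP5 ![0,3,1,2, 4] ![0,2,3,1, 4] (by decide) (by decide)) (by decide)⟩
  · exact ⟨0, rel_of_perm _ _ (mkP4 ![0,1,2,3] ![0,1,2,3] (by decide) (by decide))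
      (mkP5 ![0,1,2,3, 4] ![0,1,2,3, 4] (by decide) (by decide)) (by decide)⟩
  · exact ⟨1, rel_of_perm _ _ (mkP4 ![0,1,3,2] ![0,1,3,2] (by decide) (by decide))
      (mkP5 ![0,1,3,2, 4] ![0,1,3,2, 4] (by decide) (by decide)) (by decide)⟩
  · exact ⟨1, rel_of_perm _ _ (mkP4 ![0,1,2,3] ![0,1,2,3] (by decide) (by decide))
      (mkP5 ![0,1,2,3, 4] ![0,1,2,3, 4] (by decide) (by decide)) (by decide)⟩
  · exact ⟨2, rel_of_perm _ _ (mkP4 ![0,1,2,3] ![0,1,2,3] (by decide) (by decide))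
      (mkP5 ![0,1,2,3, 4] ![0,1,2,3, 4] (by decide) (by decide)) (by decide)⟩


def reps (m : Fin 3) : TwoLevelDesign 5 4 :=
  ⟨mkD (wv m), by
    refine ⟨by fin_cases m <;> decide, by fin_cases m <;> decide, ?_⟩
    apply span_top_of_std_mem
    intro j
    exact ⟨Fin.castSucc j, by simp [mkD]⟩⟩

/-- the invariant : sizes of nonempty zero-sum subsets -/
lemma rel_zero_sum {v v' : Fin 5 → V4} (h : Rel v v') (S : Finset (Fin 5))
    (hS : ∑ i ∈ S, v i = 0) : ∃ T : Finset (Fin 5), T.card = S.card ∧ ∑ i ∈ T, v' i = 0 := by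
  obtain ⟨g, σ, h⟩ := h
  refine ⟨S.image σ, by rw [Finset.card_image_of_injective _ σ.injective], ?_⟩
  rw [Finset.sum_image (fun a _ b _ hab => σ.injective hab)]
  have : ∑ i ∈ S, v' (σ i) = g (∑ i ∈ S, v i) := by
    rw [map_sum]; exact Finset.sum_congr rfl (fun i _ => (h i).symm)
  rw [this, hS, map_zero]

lemma reps_card_inv (m : Fin 3) (S : Finset (Fin 5)) (hS : ∑ i ∈ S, mkD (wv m) i = 0) :
    S = ∅ ∨ S.card = m.1 + 3 := by
  revert S
  rcases (by decide : ∀ m : Fin 3, m = 0 ∨ m = 1 ∨ m = 2) m with rfl | rfl | rfl <;> decide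

lemma reps_zero_sum (m : Fin 3) :
    ∃ S : Finset (Fin 5), S.card = m.1 + 3 ∧ ∑ i ∈ S, mkD (wv m) i = 0 := by
  rcases (by decide : ∀ m : Fin 3, m = 0 ∨ m = 1 ∨ m = 2) m with rfl | rfl | rfl
  · exact ⟨{0, 1, 4}, by decide, by decide⟩
  · exact ⟨{0, 1, 2, 4}, by decide, by decide⟩
  · exact ⟨Finset.univ, by decide, by decide⟩

lemma reps_ne (m m' : Fin 3) (h : Rel (mkD (wv m)) (mkD (wv m'))) : m = m' := by
  obtain ⟨S, hcard, hsum⟩ := reps_zero_sum m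
  obtain ⟨T, hT, hTsum⟩ := rel_zero_sum h S hsum
  rcases reps_card_inv m' T hTsum with rfl | hc
  · rw [Finset.card_empty] at hT; omega
  · rw [hT, hcard] at hc
    exact Fin.ext (by omega)

end TLD

/-- There are exactly 3 isomorphism classes of regular `2^{5-1}` designs with 16 runs of
resolution at least III: there are 3 designs such that every design is isomorphic to
exactly one of them. -/
theorem three_isoClasses_of_two_pow_five_sub_one :
    ∃ reps : Fin 3 → TwoLevelDesign 5 4,
      ∀ D : TwoLevelDesign 5 4, ∃! j : Fin 3, TwoLevelDesignIso D (reps j) := by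
  refine ⟨TLD.reps, fun D => ?_⟩
  obtain ⟨w, h0, hs, hA⟩ := TLD.stepA D
  obtain ⟨m, hB⟩ := TLD.stepB w h0 hs
  refine ⟨m, hA.trans hB, fun j hj => ?_⟩
  exact TLD.reps_ne j m ((TLD.Rel.symm hj).trans (hA.trans hB))
end
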